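/- arXiv:2507.02601 — 6 statements merged into one kernel-verified Lean document; each statement's English description precedes it below -/
import Mathlib

section
/- Let J be an integer with J ≥ 3 and let j be an integer with 2 ≤ j ≤ J−1. Then S(j,j) = ∑_{k=1}^{J} sin²(πk/(J+1)) · sin(jπk/(J+1))² = (J+1)/4. -/
open Real Finset

lemma cos_sum_aux (J m : ℕ) (hm1 : 1 ≤ m) (hm2 : m ≤ J) :
    ∑ k ∈ Finset.Icc 1 J, Real.cos (2 * Real.pi * m * k / ((J : ℝ) + 1)) = -1 := by
  set f : ℕ → ℝ := fun k => Real.cos (2 * Real.pi * m * k / ((J : ℝ) + 1)) with hf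
  have hJ1 : ((J : ℝ) + 1) ≠ 0 := by positivity
  set z : ℂ := Complex.exp ((2 * Real.pi * m / ((J : ℝ) + 1) : ℝ) * Complex.I) with hz
  have hz1 : z ≠ 1 := by
    intro h1
    rw [hz] at h1
    obtain ⟨n, hn⟩ := Complex.exp_eq_one_iff.mp h1
    have hre : (2 * Real.pi * m / ((J : ℝ) + 1) : ℝ) = n * (2 * Real.pi) := by
      have hn' : ((2 * Real.pi * m / ((J : ℝ) + 1) : ℝ) : ℂ) * Complex.I
          = (((n : ℝ) * (2 * Real.pi) : ℝ) : ℂ) * Complex.I := by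
        rw [hn]; push_cast; ring
      have := mul_right_cancel₀ Complex.I_ne_zero hn'
      exact Complex.ofReal_injective this
    have hπ : (0:ℝ) < Real.pi := Real.pi_pos
    have hmn : (m : ℝ) = n * ((J : ℝ) + 1) := by
      field_simp at hre
      nlinarith [hre]
    have hn0 : 0 < (n : ℝ) := by
      by_contra h
      push_neg at h
      have : (m : ℝ) ≤ 0 := by nlinarith
      have : (1 : ℝ) ≤ (m : ℝ) := by exact_mod_cast hm1
      linarith
    have hn1 : (1:ℝ) ≤ (n:ℝ) := by
      have : (1:ℤ) ≤ n := by exact_mod_cast hn0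
      exact_mod_cast this
    have : (J : ℝ) + 1 ≤ (m : ℝ) := by nlinarith
    have hmJ : (m : ℝ) ≤ (J : ℝ) := by exact_mod_cast hm2
    linarith
  have hzpow : z ^ (J + 1) = 1 := by
    rw [hz, ← Complex.exp_nat_mul]
    have : ((J : ℂ) + 1) * ((2 * Real.pi * m / ((J : ℝ) + 1) : ℝ) * Complex.I)
        = (m : ℤ) * (2 * Real.pi * Complex.I) := by
      push_cast
      have : ((J : ℂ) + 1) ≠ 0 := by
        exact_mod_cast (by exact_mod_cast hJ1 : ((J : ℂ) + 1) ≠ 0)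
      field_simp
    push_cast at this ⊢
    rw [this]
    exact Complex.exp_int_mul_two_pi_mul_I m
  have hgeom : ∑ k ∈ Finset.range (J + 1), z ^ k = 0 := by
    rw [geom_sum_eq hz1, hzpow]
    simp
  have hre : ∀ k : ℕ, (z ^ k).re = f k := by
    intro k
    rw [hz, ← Complex.exp_nat_mul, hf]
    have : (k : ℂ) * ((2 * Real.pi * m / ((J : ℝ) + 1) : ℝ) * Complex.I)
        = ((2 * Real.pi * m * k / ((J : ℝ) + 1) : ℝ) : ℂ) * Complex.I := by
      push_cast
      ring
    rw [this, Complex.exp_ofReal_mul_I_re]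
  have hsum0 : ∑ k ∈ Finset.range (J + 1), f k = 0 := by
    have := congrArg Complex.re hgeom
    rw [Complex.re_sum] at this
    simpa [hre] using this
  have hsplit : Finset.range (J + 1) = insert 0 (Finset.Icc 1 J) := by
    ext x
    simp [Finset.mem_range, Finset.mem_Icc]
    omega
  rw [hsplit, Finset.sum_insert (by simp)] at hsum0
  have hf0 : f 0 = 1 := by simp [hf]
  linarith [hsum0, hf0]

/-- For `J ≥ 3` and `2 ≤ j ≤ J - 1`,
`∑_{k=1}^{J} sin²(πk/(J+1)) · sin(jπk/(J+1))² = (J+1)/4`. -/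
theorem stmt_0 (J j : ℕ) (hJ : 3 ≤ J) (hj : 2 ≤ j) (hj' : j ≤ J - 1) :
    ∑ k ∈ Finset.Icc 1 J,
      (Real.sin (Real.pi * k / (J + 1)))^2 * (Real.sin (j * Real.pi * k / (J + 1)))^2
    = ((J : ℝ) + 1) / 4 := by
  have key : ∀ x y : ℝ, Real.sin x ^ 2 * Real.sin y ^ 2
      = 1/4 - Real.cos (2*x)/4 - Real.cos (2*y)/4
        + Real.cos (2*x + 2*y)/8 + Real.cos (2*x - 2*y)/8 := by
    intro x y
    rw [Real.cos_add, Real.cos_sub, Real.cos_two_mul, Real.cos_two_mul,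
      Real.sin_two_mul, Real.sin_two_mul, Real.cos_sq', Real.cos_sq']
    ring
  have hterm : ∀ k ∈ Finset.Icc 1 J,
      (Real.sin (Real.pi * k / (J + 1)))^2 * (Real.sin (j * Real.pi * k / (J + 1)))^2
      = 1/4 - Real.cos (2 * Real.pi * (1:ℕ) * k / ((J:ℝ)+1))/4
          - Real.cos (2 * Real.pi * (j:ℕ) * k / ((J:ℝ)+1))/4
          + Real.cos (2 * Real.pi * ((j+1:ℕ):ℝ) * k / ((J:ℝ)+1))/8
          + Real.cos (2 * Real.pi * ((j-1:ℕ):ℝ) * k / ((J:ℝ)+1))/8 := by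
    intro k hk
    rw [key]
    have hc1 : ((j+1:ℕ):ℝ) = (j:ℝ) + 1 := by push_cast; ring
    have hc2 : ((j-1:ℕ):ℝ) = (j:ℝ) - 1 := by
      have : 1 ≤ j := by omega
      push_cast [this]; ring
    rw [hc1, hc2]
    have e1 : 2 * (Real.pi * k / (J + 1)) = 2 * Real.pi * ((1:ℕ):ℝ) * k / ((J:ℝ)+1) := by
      push_cast; ring
    have e2 : 2 * ((j:ℝ) * Real.pi * k / (J + 1)) = 2 * Real.pi * (j:ℝ) * k / ((J:ℝ)+1) := by
      ring
    have e3 : 2 * (Real.pi * k / (J + 1)) + 2 * ((j:ℝ) * Real.pi * k / (J + 1))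
        = 2 * Real.pi * ((j:ℝ)+1) * k / ((J:ℝ)+1) := by ring
    have e4 : 2 * (Real.pi * k / (J + 1)) - 2 * ((j:ℝ) * Real.pi * k / (J + 1))
        = -(2 * Real.pi * ((j:ℝ)-1) * k / ((J:ℝ)+1)) := by ring
    rw [e3, e4, Real.cos_neg, e1, e2]
  rw [Finset.sum_congr rfl hterm]
  have hjJ : j ≤ J := by omega
  have h1 := cos_sum_aux J 1 (by omega) (by omega)
  have h2 := cos_sum_aux J j (by omega) hjJ
  have h3 := cos_sum_aux J (j+1) (by omega) (by omega)
  have h4 := cos_sum_aux J (j-1) (by omega) (by omega)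
  have hcard : (Finset.Icc 1 J).card = J := by simp
  rw [Finset.sum_add_distrib, Finset.sum_add_distrib, Finset.sum_sub_distrib,
    Finset.sum_sub_distrib]
  rw [Finset.sum_const, hcard]
  rw [← Finset.sum_div, ← Finset.sum_div, ← Finset.sum_div, ← Finset.sum_div,
    h1, h2, h3, h4]
  ring
end

section
/- Let J be an integer with J ≥ 2 and let j = 1 or j = J. Then S(j,j) = ∑_{k=1}^{J} sin²(πk/(J+1)) · sin(jπk/(J+1))² = (3J+3)/8. -/
open Real Finset

lemma cos_sum_zero (n m : ℕ) (hm : 0 < m) (hmn : m < n) :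
    ∑ k ∈ Finset.range n, Real.cos (2 * Real.pi * m * k / n) = 0 := by
  have hn0 : (n : ℝ) ≠ 0 := Nat.cast_ne_zero.mpr (by omega)
  have hn0' : (n : ℂ) ≠ 0 := Nat.cast_ne_zero.mpr (by omega)
  set ζ : ℂ := Complex.exp ((2 * Real.pi * m / n : ℝ) * Complex.I) with hζdef
  have hζpow : ∀ k : ℕ, ζ ^ k = Complex.exp ((2 * Real.pi * m * k / n : ℝ) * Complex.I) := by
    intro k
    rw [hζdef, ← Complex.exp_nat_mul]
    congr 1
    push_cast
    ring
  have hζn : ζ ^ n = 1 := by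
    rw [hζpow n]
    have : ((2 * Real.pi * m * n / n : ℝ) : ℂ) * Complex.I
        = (m : ℤ) * (2 * Real.pi * Complex.I) := by
      push_cast
      field_simp
    rw [this, Complex.exp_int_mul_two_pi_mul_I]
  have hζne : ζ ≠ 1 := by
    rw [hζdef, Ne, Complex.exp_eq_one_iff]
    rintro ⟨t, ht⟩
    have hI : ((2 * Real.pi * m / n : ℝ) : ℂ) = ((t : ℝ) * (2 * Real.pi) : ℝ) := by
      have h2 : ((2 * Real.pi * m / n : ℝ) : ℂ) * Complex.I
          = ((t : ℝ) * (2 * Real.pi) : ℝ) * Complex.I := by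
        rw [ht]; push_cast; ring
      exact mul_right_cancel₀ Complex.I_ne_zero h2
    have hreal : (2 * Real.pi * m / n : ℝ) = (t : ℝ) * (2 * Real.pi) := by exact_mod_cast hI
    have hmt : (m : ℝ) = t * n := by
      field_simp at hreal
      nlinarith [Real.pi_pos, hreal]
    have hmt' : (m : ℤ) = t * n := by exact_mod_cast hmt
    have hmpos : (0 : ℤ) < m := by exact_mod_cast hm
    have hdvd : (n : ℤ) ∣ (m : ℤ) := ⟨t, by linarith [hmt']⟩
    have := Int.le_of_dvd hmpos hdvd
    have hmltn : (m : ℤ) < n := by exact_mod_cast hmn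
    omega
  have hsum : ∑ k ∈ Finset.range n, ζ ^ k = 0 := by
    rw [geom_sum_eq hζne, hζn]
    simp
  have hre : ∑ k ∈ Finset.range n, Real.cos (2 * Real.pi * m * k / n)
      = (∑ k ∈ Finset.range n, ζ ^ k).re := by
    rw [Complex.re_sum]
    apply Finset.sum_congr rfl
    intro k _
    rw [hζpow k, Complex.exp_ofReal_mul_I_re]
  rw [hre, hsum]
  simp

lemma sin_quart_sum (n : ℕ) (hn : 3 ≤ n) :
    ∑ k ∈ Finset.range n, (Real.sin (Real.pi * k / n)) ^ 4 = 3 * n / 8 := by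
  have hn0 : (n : ℝ) ≠ 0 := Nat.cast_ne_zero.mpr (by omega)
  have hpoint : ∀ k : ℕ, (Real.sin (Real.pi * k / n)) ^ 4
      = 3 / 8 - (1 / 2) * Real.cos (2 * Real.pi * 1 * k / n)
        + (1 / 8) * Real.cos (2 * Real.pi * 2 * k / n) := by
    intro k
    set x : ℝ := Real.pi * k / n with hx
    have h2 : Real.cos (2 * Real.pi * 1 * k / n) = 1 - 2 * Real.sin x ^ 2 := by
      have : 2 * Real.pi * 1 * k / n = 2 * x := by rw [hx]; ring
      rw [this, Real.cos_two_mul, Real.cos_sq']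
      ring
    have h4 : Real.cos (2 * Real.pi * 2 * k / n)
        = 1 - 2 * (2 * Real.sin x * Real.cos x) ^ 2 := by
      have : 2 * Real.pi * 2 * k / n = 2 * (2 * x) := by rw [hx]; ring
      rw [this, Real.cos_two_mul, Real.cos_sq', Real.sin_two_mul]
      ring
    have hsc : Real.sin x ^ 2 + Real.cos x ^ 2 = 1 := Real.sin_sq_add_cos_sq x
    rw [h2, h4]
    nlinarith [hsc]
  rw [Finset.sum_congr rfl (fun k _ => hpoint k)]
  rw [Finset.sum_add_distrib, Finset.sum_sub_distrib, ← Finset.mul_sum, ← Finset.mul_sum]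
  have c1 := cos_sum_zero n 1 (by norm_num) (by omega)
  have c2 := cos_sum_zero n 2 (by norm_num) (by omega)
  push_cast at c1 c2
  rw [c1, c2, Finset.sum_const, Finset.card_range]
  ring

/-- For `J ≥ 2` and `j = 1` or `j = J`,
`∑_{k=1}^{J} sin²(πk/(J+1)) · sin(jπk/(J+1))² = (3J+3)/8`. -/
theorem stmt_1 (J j : ℕ) (hJ : 2 ≤ J) (hj : j = 1 ∨ j = J) :
    ∑ k ∈ Finset.Icc 1 J,
      (Real.sin (Real.pi * k / (J + 1)))^2 * (Real.sin (j * Real.pi * k / (J + 1)))^2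
    = (3 * (J : ℝ) + 3) / 8 := by
  have hn0 : ((J : ℝ) + 1) ≠ 0 := by positivity
  -- reduce each term to sin^4
  have hterm : ∀ k : ℕ,
      (Real.sin (Real.pi * k / (J + 1)))^2 * (Real.sin (j * Real.pi * k / (J + 1)))^2
      = (Real.sin (Real.pi * k / (J + 1))) ^ 4 := by
    intro k
    have hj' : (j : ℝ) * Real.pi * k / (J + 1) = Real.pi * k / (J + 1) ∨
        Real.sin ((j : ℝ) * Real.pi * k / (J + 1)) ^ 2
          = Real.sin (Real.pi * k / (J + 1)) ^ 2 := by
      rcases hj with rfl | rfl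
      · left; push_cast; ring
      · right
        have harg : (j : ℝ) * Real.pi * k / (j + 1) = k * Real.pi - Real.pi * k / (j + 1) := by
          field_simp
          ring
        rw [harg, Real.sin_sub, Real.sin_nat_mul_pi]
        have hc : (Real.cos ((k : ℝ) * Real.pi)) ^ 2 = 1 := by
          have h := Real.sin_sq_add_cos_sq ((k : ℝ) * Real.pi)
          rw [Real.sin_nat_mul_pi] at h
          nlinarith [h]
        nlinarith [hc]
    rcases hj' with h | h
    · rw [h]; ring
    · rw [h]; ring
  rw [Finset.sum_congr rfl (fun k _ => hterm k)]
  have hrange : ∑ k ∈ Finset.range (J + 1), (Real.sin (Real.pi * k / (J + 1))) ^ 4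
      = ∑ k ∈ Finset.Icc 1 J, (Real.sin (Real.pi * k / (J + 1))) ^ 4 := by
    rw [Finset.range_eq_Ico,
      Finset.sum_eq_sum_sdiff_singleton_add (by simp : 0 ∈ Finset.Ico 0 (J + 1))]
    have heq : Finset.Ico 0 (J + 1) \ {0} = Finset.Icc 1 J := by
      ext k; simp; omega
    rw [heq]
    norm_num
  have hq := sin_quart_sum (J + 1) (by omega)
  push_cast at hq
  rw [← hrange, hq]
  ring
end

section
/- Let J be a positive integer and let j, j' be integers with 1 ≤ j, j' = j + 2, and j' ≤ J. Then S(j,j') = ∑_{k=1}^{J} sin²(πk/(J+1)) · sin(jπk/(J+1)) · sin(j'πk/(J+1)) = −(J+1)/8. -/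
open Real Finset

lemma sum_cos_eq (J r : ℕ) (h1 : 1 ≤ r) (h2 : r ≤ J) :
    ∑ k ∈ Finset.Icc 1 J, Real.cos (2 * Real.pi * r * k / (J + 1)) = -1 := by
  have hn : ((J : ℝ) + 1) ≠ 0 := by positivity
  set θ : ℝ := 2 * Real.pi * r / (J + 1) with hθ
  set z : ℂ := Complex.exp (θ * Complex.I) with hzdef
  have hz1 : z ≠ 1 := by
    rw [hzdef, Ne, Complex.exp_eq_one_iff]
    rintro ⟨m, hm⟩
    have : (θ : ℂ) = m * (2 * Real.pi) := by
      refine mul_right_cancel₀ Complex.I_ne_zero ?_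
      rw [hm]; ring
    have hre : θ = m * (2 * Real.pi) := by exact_mod_cast this
    have hpos : 0 < θ := by
      rw [hθ]; positivity
    have hlt : θ < 2 * Real.pi := by
      rw [hθ, div_lt_iff₀ (by positivity)]
      have : (r : ℝ) < (J : ℝ) + 1 := by exact_mod_cast Nat.lt_succ_of_le h2
      nlinarith [Real.pi_pos]
    have h0 : (0 : ℝ) < m := by nlinarith [Real.pi_pos]
    have h1' : (m : ℝ) < 1 := by nlinarith [Real.pi_pos]
    have : (0 : ℤ) < m := by exact_mod_cast h0
    have : m < 1 := by exact_mod_cast h1'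
    omega
  have hzn : z ^ (J + 1) = 1 := by
    rw [hzdef, ← Complex.exp_nat_mul]
    have hnC : ((J : ℂ) + 1) ≠ 0 := by
      exact_mod_cast Complex.ofReal_ne_zero.mpr hn
    have : ((J : ℂ) + 1) * (θ * Complex.I) = r * (2 * Real.pi * Complex.I) := by
      rw [hθ]; push_cast; field_simp
    push_cast
    rw [this, Complex.exp_nat_mul_two_pi_mul_I]
  have hsum : ∑ k ∈ Finset.range (J + 1), z ^ k = 0 := by
    rw [geom_sum_eq hz1, hzn, sub_self, zero_div]
  have hre : ∀ k : ℕ, (z ^ k).re = Real.cos (2 * Real.pi * r * k / (J + 1)) := by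
    intro k
    rw [hzdef, ← Complex.exp_nat_mul]
    have : (k : ℂ) * (θ * Complex.I) = (↑(2 * Real.pi * r * k / (J + 1)) : ℝ) * Complex.I := by
      push_cast [hθ]; ring
    rw [this, Complex.exp_ofReal_mul_I_re]
  have hreal : ∑ k ∈ Finset.range (J + 1), Real.cos (2 * Real.pi * r * k / (J + 1)) = 0 := by
    have := congrArg Complex.re hsum
    rw [Complex.re_sum] at this
    simpa [hre] using this
  have hsplit : Finset.range (J + 1) = insert 0 (Finset.Icc 1 J) := by
    ext x; simp; omega
  rw [hsplit, Finset.sum_insert (by simp)] at hreal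
  simp at hreal
  linarith

lemma key_id (a x : ℝ) :
    Real.sin a ^ 2 * (Real.sin x * Real.sin (x + 2*a)) =
      (1/4) * Real.cos (2*a) - (1/4) * Real.cos (2*x + 2*a) - 1/8
      - (1/8) * Real.cos (2*a + 2*a) + (1/8) * Real.cos (2*x + (2*a + 2*a))
      + (1/8) * Real.cos (2*x) := by
  simp only [Real.cos_add, Real.sin_add, Real.cos_two_mul, Real.sin_two_mul]
  linear_combination
    (-Real.sin x^2 - Real.cos a^2 + Real.cos a^2 * Real.cos x^2 + 2 * Real.cos a^2 * Real.sin x^2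
      + 2 * Real.sin a * Real.cos a * Real.sin x * Real.cos x) * Real.sin_sq_add_cos_sq a
    + (-1 + 3 * Real.cos a^2 - 2 * Real.cos a^4) * Real.sin_sq_add_cos_sq x

/-- For a positive integer `J` and integers `j, j'` with `1 ≤ j`, `j' = j + 2` and `j' ≤ J`,
`∑_{k=1}^{J} sin²(πk/(J+1)) · sin(jπk/(J+1)) · sin(j'πk/(J+1)) = −(J+1)/8`. -/
theorem stmt_2 (J j j' : ℕ) (hJ : 1 ≤ J) (hj : 1 ≤ j) (hj' : j' = j + 2) (hj'J : j' ≤ J) :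
    ∑ k ∈ Finset.Icc 1 J,
      (Real.sin (Real.pi * k / (J + 1)))^2 *
        (Real.sin (j * Real.pi * k / (J + 1)) * Real.sin (j' * Real.pi * k / (J + 1)))
    = -(((J : ℝ) + 1) / 8) := by
  have hsummand : ∀ k ∈ Finset.Icc 1 J,
      (Real.sin (Real.pi * k / (J + 1)))^2 *
        (Real.sin (j * Real.pi * k / (J + 1)) * Real.sin (j' * Real.pi * k / (J + 1)))
      = (1/4) * Real.cos (2 * Real.pi * (1:ℕ) * k / (J + 1))
        - (1/4) * Real.cos (2 * Real.pi * (↑(j+1)) * k / (J + 1)) - 1/8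
        - (1/8) * Real.cos (2 * Real.pi * (2:ℕ) * k / (J + 1))
        + (1/8) * Real.cos (2 * Real.pi * (↑(j+2)) * k / (J + 1))
        + (1/8) * Real.cos (2 * Real.pi * (j:ℕ) * k / (J + 1)) := by
    intro k hk
    have e1 : (j' : ℝ) * Real.pi * k / (J + 1)
        = (j : ℝ) * Real.pi * k / (J + 1) + 2 * (Real.pi * k / (J + 1)) := by
      rw [hj']; push_cast; ring
    rw [e1, key_id (Real.pi * k / (J + 1)) ((j : ℝ) * Real.pi * k / (J + 1))]
    push_cast
    ring_nf
  rw [Finset.sum_congr rfl hsummand]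
  have h1 := sum_cos_eq J 1 le_rfl hJ
  have h2 := sum_cos_eq J 2 (by omega) (by omega)
  have hja := sum_cos_eq J j hj (by omega)
  have hjb := sum_cos_eq J (j+1) (by omega) (by omega)
  have hjc := sum_cos_eq J (j+2) (by omega) (by omega)
  simp only [Finset.sum_add_distrib, Finset.sum_sub_distrib, ← Finset.mul_sum,
    Finset.sum_const, Nat.card_Icc, nsmul_eq_mul]
  rw [h1, h2, hja, hjb, hjc]
  have : (J + 1 - 1 : ℕ) = J := by omega
  rw [this]
  ring
end

section
/- Let J be a positive integer and let j, j' be integers with 1 ≤ j ≤ J, 1 ≤ j' ≤ J, j ≠ j', and |j − j'| ≠ 2. Then S(j,j') = ∑_{k=1}^{J} sin²(πk/(J+1)) · sin(jπk/(J+1)) · sin(j'πk/(J+1)) = 0. -/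
open Real Finset

lemma perterm (x y θ : ℝ) :
    Real.sin θ ^ 2 * (Real.sin (x*θ) * Real.sin (y*θ)) =
      1/4 * Real.cos ((x-y)*θ) - 1/4 * Real.cos ((x+y)*θ)
      - 1/8 * Real.cos ((x-y+2)*θ) - 1/8 * Real.cos ((x-y-2)*θ)
      + 1/8 * Real.cos ((x+y+2)*θ) + 1/8 * Real.cos ((x+y-2)*θ) := by
  have hsin : ∀ a b : ℝ, Real.sin a * Real.sin b = (Real.cos (a-b) - Real.cos (a+b))/2 := by
    intro a b; rw [Real.cos_sub, Real.cos_add]; ring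
  have hcos : ∀ a b : ℝ, Real.cos a * Real.cos b = (Real.cos (a-b) + Real.cos (a+b))/2 := by
    intro a b; rw [Real.cos_sub, Real.cos_add]; ring
  have hsq : Real.sin θ ^ 2 = 1/2 - Real.cos (2*θ)/2 := Real.sin_sq_eq_half_sub θ
  have e1 : Real.cos (2*θ) * Real.cos ((x-y)*θ)
      = (Real.cos ((x-y-2)*θ) + Real.cos ((x-y+2)*θ))/2 := by
    rw [hcos, show 2*θ - (x-y)*θ = -((x-y-2)*θ) by ring, Real.cos_neg,
      show 2*θ + (x-y)*θ = (x-y+2)*θ by ring]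
  have e2 : Real.cos (2*θ) * Real.cos ((x+y)*θ)
      = (Real.cos ((x+y-2)*θ) + Real.cos ((x+y+2)*θ))/2 := by
    rw [hcos, show 2*θ - (x+y)*θ = -((x+y-2)*θ) by ring, Real.cos_neg,
      show 2*θ + (x+y)*θ = (x+y+2)*θ by ring]
  rw [hsq, hsin (x*θ) (y*θ), show x*θ - y*θ = (x-y)*θ by ring,
    show x*θ + y*θ = (x+y)*θ by ring]
  linear_combination (-(1/4:ℝ)) * e1 + (1/4:ℝ) * e2

lemma cos_sum_odd (J : ℕ) (m : ℤ) (hm : Odd m) :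
    ∑ k ∈ Finset.Icc 1 J, Real.cos ((m:ℝ) * Real.pi * k / (J+1)) = 0 := by
  obtain ⟨l, hl⟩ := hm
  have key : ∑ k ∈ Finset.Icc 1 J, Real.cos ((m:ℝ) * Real.pi * k / (J+1))
      = ∑ k ∈ Finset.Icc 1 J, -(Real.cos ((m:ℝ) * Real.pi * k / (J+1))) := by
    apply Finset.sum_nbij' (fun k => J + 1 - k) (fun k => J + 1 - k)
    · intro a ha; simp only [Finset.mem_Icc] at *; omega
    · intro a ha; simp only [Finset.mem_Icc] at *; omega
    · intro a ha; simp only [Finset.mem_Icc] at *; omega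
    · intro a ha; simp only [Finset.mem_Icc] at *; omega
    · intro a ha
      simp only [Finset.mem_Icc] at ha
      have hcast : ((J + 1 - a : ℕ) : ℝ) = (J:ℝ) + 1 - a := by
        push_cast [Nat.cast_sub (by omega : a ≤ J + 1)]; ring
      rw [hcast]
      have harg : (m:ℝ) * Real.pi * ((J:ℝ) + 1 - a) / (J+1)
          = -((m:ℝ) * Real.pi * a / (J+1)) + Real.pi + (l:ℝ) * (2 * Real.pi) := by
        have hJ1 : ((J:ℝ) + 1) ≠ 0 := by positivity
        field_simp
        have : (m:ℝ) = 2*l + 1 := by exact_mod_cast hl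
        rw [this]; ring
      rw [harg, Real.cos_add_int_mul_two_pi, Real.cos_add_pi, Real.cos_neg]; ring
  have := key
  rw [Finset.sum_neg_distrib] at this
  linarith

lemma cos_sum_even (J : ℕ) (r : ℤ) (hr : ¬ ((J+1:ℤ) ∣ r)) :
    ∑ k ∈ Finset.Icc 1 J, Real.cos (((2*r : ℤ):ℝ) * Real.pi * k / (J+1)) = -1 := by
  have hNR : ((J:ℝ) + 1) ≠ 0 := by positivity
  have hNC : ((J:ℂ) + 1) ≠ 0 := by
    intro h
    apply hNR
    exact_mod_cast congrArg Complex.re h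
  set ζ : ℂ := Complex.exp (((2 * Real.pi * r / (J+1) : ℝ) : ℂ) * Complex.I) with hζ
  have hζpow : ∀ k : ℕ, ζ ^ k = Complex.exp (((2 * Real.pi * r * k / (J+1) : ℝ) : ℂ) * Complex.I) := by
    intro k
    rw [hζ, ← Complex.exp_nat_mul]
    congr 1
    push_cast
    ring
  have hζN : ζ ^ (J+1) = 1 := by
    rw [hζpow (J+1)]
    push_cast
    rw [show 2 * (Real.pi:ℂ) * r * ((J:ℂ)+1) / ((J:ℂ)+1) * Complex.I
        = (r:ℂ) * (2 * (Real.pi:ℂ) * Complex.I) * (((J:ℂ)+1)/((J:ℂ)+1)) by ring,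
      div_self hNC, mul_one]
    exact Complex.exp_int_mul_two_pi_mul_I r
  have hπI : (2 * (Real.pi:ℂ) * Complex.I) ≠ 0 := by
    simp [Real.pi_ne_zero, Complex.I_ne_zero, Complex.ofReal_ne_zero]
  have hζ1 : ζ ≠ 1 := by
    rw [hζ, Ne, Complex.exp_eq_one_iff]
    rintro ⟨n, hn⟩
    apply hr ⟨n, ?_⟩
    have h2 : ((r:ℂ)/((J:ℂ)+1)) * (2 * (Real.pi:ℂ) * Complex.I)
        = (n:ℂ) * (2 * (Real.pi:ℂ) * Complex.I) := by
      push_cast at hn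
      linear_combination hn
    have h3 := mul_right_cancel₀ hπI h2
    rw [div_eq_iff hNC] at h3
    have h4 : r = n * ((J:ℤ)+1) := by exact_mod_cast h3
    linear_combination h4
  have hgeom : ∑ k ∈ Finset.range (J+1), ζ ^ k = 0 := by
    rw [geom_sum_eq hζ1, hζN]
    simp
  have hsplit : Finset.Icc 1 J = (Finset.range (J+1)).erase 0 := by
    ext a; simp; omega
  have hzsum : ∑ k ∈ Finset.Icc 1 J, ζ ^ k = -1 := by
    rw [hsplit]
    have h := Finset.add_sum_erase (Finset.range (J+1)) (fun k => ζ ^ k)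
      (by simp : 0 ∈ Finset.range (J+1))
    simp only [pow_zero] at h
    rw [hgeom] at h
    linear_combination h
  have hre : ∀ k : ℕ, Real.cos (((2*r : ℤ):ℝ) * Real.pi * k / (J+1)) = (ζ ^ k).re := by
    intro k
    rw [hζpow, Complex.exp_ofReal_mul_I_re]
    congr 1
    push_cast; ring
  calc ∑ k ∈ Finset.Icc 1 J, Real.cos (((2*r : ℤ):ℝ) * Real.pi * k / (J+1))
      = ∑ k ∈ Finset.Icc 1 J, (ζ ^ k).re := Finset.sum_congr rfl (fun k _ => hre k)
    _ = (∑ k ∈ Finset.Icc 1 J, ζ ^ k).re := by rw [Complex.re_sum]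
    _ = -1 := by rw [hzsum]; simp

lemma cos_sum_even' (J : ℕ) (m : ℤ) (hm : Even m) (h0 : m ≠ 0) (h2 : |m| < 2*((J:ℤ)+1)) :
    ∑ k ∈ Finset.Icc 1 J, Real.cos ((m:ℝ) * Real.pi * k / (J+1)) = -1 := by
  obtain ⟨a, ha⟩ := hm
  rw [abs_lt] at h2
  rw [show m = 2*a by omega]
  apply cos_sum_even
  intro hdvd
  have : a = 0 := Int.eq_zero_of_abs_lt_dvd hdvd (by rw [abs_lt]; omega)
  omega

/-- For a positive integer `J` and integers `j, j'` with `1 ≤ j, j' ≤ J`, `j ≠ j'` and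
`|j − j'| ≠ 2`, `∑_{k=1}^{J} sin²(πk/(J+1)) · sin(jπk/(J+1)) · sin(j'πk/(J+1)) = 0`. -/
theorem stmt_3 (J j j' : ℕ) (hJ : 1 ≤ J) (hj : 1 ≤ j) (hjJ : j ≤ J) (hj' : 1 ≤ j')
    (hj'J : j' ≤ J) (hne : j ≠ j') (hdist : |(j : ℤ) - (j' : ℤ)| ≠ 2) :
    ∑ k ∈ Finset.Icc 1 J,
      (Real.sin (Real.pi * k / (J + 1)))^2 *
        (Real.sin (j * Real.pi * k / (J + 1)) * Real.sin (j' * Real.pi * k / (J + 1)))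
    = 0 := by
  have perk : ∀ k ∈ Finset.Icc 1 J,
      (Real.sin (Real.pi * k / (J + 1)))^2 *
        (Real.sin (j * Real.pi * k / (J + 1)) * Real.sin (j' * Real.pi * k / (J + 1)))
      = 1/4 * Real.cos ((((j:ℤ)-j' : ℤ):ℝ) * Real.pi * k / (J+1))
        - 1/4 * Real.cos ((((j:ℤ)+j' : ℤ):ℝ) * Real.pi * k / (J+1))
        - 1/8 * Real.cos ((((j:ℤ)-j'+2 : ℤ):ℝ) * Real.pi * k / (J+1))
        - 1/8 * Real.cos ((((j:ℤ)-j'-2 : ℤ):ℝ) * Real.pi * k / (J+1))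
        + 1/8 * Real.cos ((((j:ℤ)+j'+2 : ℤ):ℝ) * Real.pi * k / (J+1))
        + 1/8 * Real.cos ((((j:ℤ)+j'-2 : ℤ):ℝ) * Real.pi * k / (J+1)) := by
    intro k _
    rw [show (j:ℝ) * Real.pi * k / (J+1) = (j:ℝ) * (Real.pi * k / ((J:ℝ)+1)) by ring,
        show (j':ℝ) * Real.pi * k / (J+1) = (j':ℝ) * (Real.pi * k / ((J:ℝ)+1)) by ring,
        perterm]
    push_cast
    ring_nf
  rw [Finset.sum_congr rfl perk]
  simp only [Finset.sum_add_distrib, Finset.sum_sub_distrib, ← Finset.mul_sum]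
  have hd2 : ((j:ℤ) - j') ≠ 2 ∧ ((j:ℤ) - j') ≠ -2 := by
    constructor <;> intro hx <;> apply hdist <;> rw [hx] <;> norm_num
  obtain ⟨hd2a, hd2b⟩ := hd2
  rcases Int.even_or_odd ((j:ℤ) - j') with he | ho
  · obtain ⟨a, ha⟩ := he
    rw [cos_sum_even' J ((j:ℤ)-j') ⟨a, ha⟩ (by omega) (by rw [abs_lt]; omega),
        cos_sum_even' J ((j:ℤ)+j') ⟨a+j', by omega⟩ (by omega) (by rw [abs_lt]; omega),
        cos_sum_even' J ((j:ℤ)-j'+2) ⟨a+1, by omega⟩ (by omega) (by rw [abs_lt]; omega),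
        cos_sum_even' J ((j:ℤ)-j'-2) ⟨a-1, by omega⟩ (by omega) (by rw [abs_lt]; omega),
        cos_sum_even' J ((j:ℤ)+j'+2) ⟨a+j'+1, by omega⟩ (by omega) (by rw [abs_lt]; omega),
        cos_sum_even' J ((j:ℤ)+j'-2) ⟨a+j'-1, by omega⟩ (by omega) (by rw [abs_lt]; omega)]
    norm_num
  · obtain ⟨l, hl⟩ := ho
    rw [cos_sum_odd J ((j:ℤ)-j') ⟨l, hl⟩,
        cos_sum_odd J ((j:ℤ)+j') ⟨l+j', by omega⟩,
        cos_sum_odd J ((j:ℤ)-j'+2) ⟨l+1, by omega⟩,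
        cos_sum_odd J ((j:ℤ)-j'-2) ⟨l-1, by omega⟩,
        cos_sum_odd J ((j:ℤ)+j'+2) ⟨l+j'+1, by omega⟩,
        cos_sum_odd J ((j:ℤ)+j'-2) ⟨l+j'-1, by omega⟩]
    norm_num
end

section
/- Let J be a positive integer and let k, k' be integers such that cos(2πk/(J+1)) ≠ cos(2πk'/(J+1)). Then |2cos(2πk/(J+1)) − 2cos(2πk'/(J+1))| ≥ 8/(J+1)². -/
open Real

lemma aux_sin_bound {x N : ℝ} (hN : 2 ≤ N) (h1 : π / N ≤ x) (h2 : x ≤ π - π / N) :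
    2 / N ≤ Real.sin x := by
  have hpi := Real.pi_pos
  have hN0 : (0:ℝ) < N := by linarith
  have hpn : 0 < π / N := by positivity
  have key : ∀ y : ℝ, π / N ≤ y → y ≤ π / 2 → 2 / N ≤ Real.sin y := by
    intro y hy1 hy2
    have := Real.mul_le_sin (x := y) (by linarith) hy2
    have h4 : 2 / π * (π / N) ≤ 2 / π * y := by
      apply mul_le_mul_of_nonneg_left hy1 (by positivity)
    have h5 : 2 / π * (π / N) = 2 / N := by field_simp
    linarith
  rcases le_or_gt x (π / 2) with h | h
  · exact key x h1 h
  · have : Real.sin x = Real.sin (π - x) := (Real.sin_pi_sub x).symm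
    rw [this]
    exact key (π - x) (by linarith) (by linarith)

lemma aux_sin (n : ℕ) (hn2 : 2 ≤ n) (m : ℤ)
    (hm : ∀ t : ℤ, (m : ℝ) ≠ (n : ℝ) * t) :
    2 / (n : ℝ) ≤ |Real.sin (π * m / n)| := by
  have hn0 : (0:ℤ) < (n:ℤ) := by omega
  have hnR : (0:ℝ) < (n:ℝ) := by positivity
  have hnR2 : (2:ℝ) ≤ (n:ℝ) := by exact_mod_cast hn2
  set q : ℤ := m / n with hq
  set r : ℤ := m % n with hrdef
  have hmr : m = n * q + r := (Int.mul_ediv_add_emod m n).symm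
  have hr0 : 0 ≤ r := Int.emod_nonneg m (by omega)
  have hrlt : r < n := Int.emod_lt_of_pos m hn0
  have hr1 : 1 ≤ r := by
    rcases hr0.lt_or_eq with h | h
    · omega
    · exfalso
      apply hm q
      push_cast [hmr, ← h]
      ring
  have key : π * m / n = π * r / n + q * π := by
    field_simp
    push_cast [hmr]
    ring
  rw [key, Real.sin_add_int_mul_pi, abs_mul]
  have h1 : |((-1 : ℝ)) ^ q| = 1 := by
    rcases Int.even_or_odd q with h | h
    · rw [h.neg_one_zpow]; norm_num
    · rw [h.neg_one_zpow]; norm_num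
  rw [h1, one_mul]
  have hpi := Real.pi_pos
  have hb : 2 / (n:ℝ) ≤ Real.sin (π * r / n) := by
    apply aux_sin_bound hnR2
    · rw [div_le_div_iff₀ hnR hnR]
      have hrr : (1:ℝ) ≤ (r:ℝ) := by exact_mod_cast hr1
      nlinarith [mul_nonneg (mul_nonneg hpi.le hnR.le) (sub_nonneg.2 hrr)]
    · have hrn : (r:ℝ) + 1 ≤ (n:ℝ) := by exact_mod_cast hrlt
      rw [div_le_iff₀ hnR, sub_mul, div_mul_cancel₀ _ (ne_of_gt hnR)]
      nlinarith [mul_nonneg hpi.le (sub_nonneg.2 hrn)]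
  exact hb.trans (le_abs_self _)

/-- Any two distinct eigenvalues `2cos(2πk/(J+1))` of the Feynman–Kitaev Hamiltonian of a
cyclic Hamiltonian cell automaton of period `J+1` are separated by at least `8/(J+1)²`. -/
theorem stmt_5 (J : ℕ) (hJ : 1 ≤ J) (k k' : ℤ)
    (hne : Real.cos (2 * Real.pi * k / (J + 1)) ≠ Real.cos (2 * Real.pi * k' / (J + 1))) :
    |2 * Real.cos (2 * Real.pi * k / (J + 1)) - 2 * Real.cos (2 * Real.pi * k' / (J + 1))|
      ≥ 8 / ((J : ℝ) + 1)^2 := by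
  have hn2 : 2 ≤ J + 1 := by omega
  have hNR : ((J:ℝ) + 1) = ((J + 1 : ℕ) : ℝ) := by push_cast; ring
  have hN0 : (0:ℝ) < (J:ℝ) + 1 := by positivity
  -- nondivisibility of k - k'
  have hd : ∀ t : ℤ, ((k - k' : ℤ) : ℝ) ≠ ((J+1 : ℕ) : ℝ) * t := by
    intro t ht
    apply hne
    have : 2 * π * k / (J + 1) = 2 * π * k' / (J + 1) + t * (2 * π) := by
      push_cast at ht ⊢
      field_simp
      nlinarith [Real.pi_pos, ht]
    rw [this, Real.cos_add_int_mul_two_pi]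
  have hs : ∀ t : ℤ, ((k + k' : ℤ) : ℝ) ≠ ((J+1 : ℕ) : ℝ) * t := by
    intro t ht
    apply hne
    have : 2 * π * k / (J + 1) = -(2 * π * k' / (J + 1)) + t * (2 * π) := by
      push_cast at ht ⊢
      field_simp
      nlinarith [Real.pi_pos, ht]
    rw [this, Real.cos_add_int_mul_two_pi, Real.cos_neg]
  have hbd := aux_sin (J+1) hn2 (k - k') hd
  have hbs := aux_sin (J+1) hn2 (k + k') hs
  have hform : 2 * Real.cos (2 * π * k / (J + 1)) - 2 * Real.cos (2 * π * k' / (J + 1))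
      = -4 * (Real.sin (π * (k + k') / (J + 1)) * Real.sin (π * (k - k') / (J + 1))) := by
    have := Real.cos_sub_cos (2 * π * k / (J + 1)) (2 * π * k' / (J + 1))
    have e1 : (2 * π * k / (J + 1) + 2 * π * k' / (J + 1)) / 2 = π * (k + k') / (J + 1) := by
      push_cast; field_simp
    have e2 : (2 * π * k / (J + 1) - 2 * π * k' / (J + 1)) / 2 = π * (k - k') / (J + 1) := by
      push_cast; field_simp
    rw [e1, e2] at this
    linarith
  rw [ge_iff_le, hform, abs_mul, abs_mul]
  have h4 : |(-4 : ℝ)| = 4 := by norm_num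
  rw [h4]
  have hbd := aux_sin (J+1) hn2 (k - k') hd
  have hbs := aux_sin (J+1) hn2 (k + k') hs
  push_cast at hbd hbs
  calc 8 / ((J:ℝ)+1)^2 ≤ 4 * ((2/((J:ℝ)+1)) * (2/((J:ℝ)+1))) := by
        have hx : (0:ℝ) < ((J:ℝ)+1)^2 := by positivity
        have e : 4 * ((2/((J:ℝ)+1)) * (2/((J:ℝ)+1))) = 16/((J:ℝ)+1)^2 := by
          field_simp; ring
        rw [e, div_le_div_iff₀ hx hx]
        nlinarith [sq_nonneg ((J:ℝ)+1)]
    _ ≤ 4 * (|Real.sin (π * ((k:ℝ) + k') / ((J:ℝ) + 1))| * |Real.sin (π * ((k:ℝ) - k') / ((J:ℝ) + 1))|) := by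
        apply mul_le_mul_of_nonneg_left _ (by norm_num)
        exact mul_le_mul hbs hbd (by positivity) (le_trans (by positivity) hbs)
end

section
/- Let N be a natural number with N ≥ 2 and let a be a real number with 2 ≤ a ≤ N. Then the tail of the exponential series satisfies ∑_{k=2N²+1}^{∞} a^k / k! ≤ a^{−(N²−N)}. -/
open Nat

/-!
Since `(M + k)! ≥ M! (M + 1)^k`, the tail `∑_{k ≥ M} a^k / k!` is dominated by a geometric
series of ratio `a / (M + 1)`; for `M = 2N² + 1` and `a ≤ N` this ratio is at most `1/2`, so the
tail is at most `2 a^M / M!`. It remains to show `2 N^(M + N² - N) ≤ M!`, which follows by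
splitting `M!` at `N²`: `(N²)! ≥ N! (N + 1)^(N² - N) ≥ 2 N^(N² - N)` and
`M! / (N²)! ≥ (N² + 1)^(N² + 1) ≥ N^(2N² + 2)`.
-/

theorem pow_add_div_factorial_add_le {x : ℝ} (hx : 0 ≤ x) (M k : ℕ) :
    x ^ (k + M) / (k + M)! ≤ x ^ M / M ! * (x / (M + 1)) ^ k := by
  have hden : (M ! : ℝ) * (M + 1) ^ k ≤ (k + M)! := by
    rw [add_comm k M]
    exact_mod_cast Nat.factorial_mul_pow_le_factorial
  calc x ^ (k + M) / (k + M)!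
      ≤ x ^ (k + M) / ((M ! : ℝ) * (M + 1) ^ k) :=
        div_le_div_of_nonneg_left (by positivity) (by positivity) hden
    _ = x ^ M / M ! * (x / (M + 1)) ^ k := by
        rw [pow_add, div_pow]
        field_simp

theorem tsum_pow_add_div_factorial_add_le {x : ℝ} (hx : 0 ≤ x) {M : ℕ} (hxM : 2 * x ≤ M + 1) :
    ∑' k : ℕ, x ^ (k + M) / (k + M)! ≤ 2 * x ^ M / M ! := by
  have hterm (k : ℕ) : x ^ (k + M) / (k + M)! ≤ x ^ M / M ! * (1 / 2) ^ k := by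
    refine (pow_add_div_factorial_add_le hx M k).trans ?_
    refine mul_le_mul_of_nonneg_left (pow_le_pow_left₀ (by positivity) ?_ k) (by positivity)
    rw [div_le_iff₀ (by positivity)]
    linarith
  have hgeom : Summable fun k : ℕ => x ^ M / M ! * (1 / 2 : ℝ) ^ k :=
    summable_geometric_two.mul_left _
  calc ∑' k : ℕ, x ^ (k + M) / (k + M)!
      ≤ ∑' k : ℕ, x ^ M / M ! * (1 / 2 : ℝ) ^ k :=
        (hgeom.of_nonneg_of_le (fun k => by positivity) hterm).tsum_le_tsum hterm hgeom
    _ = 2 * x ^ M / M ! := by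
        rw [tsum_mul_left, tsum_geometric_two]
        ring

namespace Nat

theorem two_mul_pow_sub_le_factorial_sq {N : ℕ} (hN : 2 ≤ N) : 2 * N ^ (N ^ 2 - N) ≤ (N ^ 2)! :=
  calc 2 * N ^ (N ^ 2 - N)
      ≤ N ! * (N + 1) ^ (N ^ 2 - N) :=
        Nat.mul_le_mul (factorial_le hN) (Nat.pow_le_pow_left (le_succ N) _)
    _ ≤ (N + (N ^ 2 - N))! := factorial_mul_pow_le_factorial
    _ = (N ^ 2)! := by rw [Nat.add_sub_cancel' (le_self_pow two_ne_zero N)]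

theorem factorial_sq_mul_pow_le_factorial (N : ℕ) :
    (N ^ 2)! * N ^ (2 * N ^ 2 + 2) ≤ (2 * N ^ 2 + 1)! :=
  calc (N ^ 2)! * N ^ (2 * N ^ 2 + 2)
      = (N ^ 2)! * (N ^ 2) ^ (N ^ 2 + 1) := by ring
    _ ≤ (N ^ 2)! * (N ^ 2 + 1) ^ (N ^ 2 + 1) :=
        Nat.mul_le_mul_left _ (Nat.pow_le_pow_left (le_succ _) _)
    _ ≤ (N ^ 2 + (N ^ 2 + 1))! := factorial_mul_pow_le_factorial
    _ = (2 * N ^ 2 + 1)! := by ring_nf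

theorem two_mul_pow_le_factorial_two_mul_sq_add_one {N : ℕ} (hN : 2 ≤ N) :
    2 * N ^ (2 * N ^ 2 + 1 + (N ^ 2 - N)) ≤ (2 * N ^ 2 + 1)! :=
  calc 2 * N ^ (2 * N ^ 2 + 1 + (N ^ 2 - N))
      ≤ 2 * N ^ ((N ^ 2 - N) + (2 * N ^ 2 + 2)) :=
        Nat.mul_le_mul_left 2 (Nat.pow_le_pow_right (by omega) (by omega))
    _ = 2 * N ^ (N ^ 2 - N) * N ^ (2 * N ^ 2 + 2) := by ring
    _ ≤ (N ^ 2)! * N ^ (2 * N ^ 2 + 2) :=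
        Nat.mul_le_mul_right _ (two_mul_pow_sub_le_factorial_sq hN)
    _ ≤ (2 * N ^ 2 + 1)! := factorial_sq_mul_pow_le_factorial N

end Nat

/-- For `N ≥ 2` and `2 ≤ a ≤ N`, the tail of the exponential series satisfies
`∑_{k=2N²+1}^{∞} a^k / k! ≤ a^{−(N²−N)}`. -/
theorem stmt_10 (N : ℕ) (hN : 2 ≤ N) (a : ℝ) (ha : 2 ≤ a) (haN : a ≤ N) :
    ∑' k : ℕ, a ^ (k + (2 * N^2 + 1)) / (Nat.factorial (k + (2 * N^2 + 1)))
      ≤ (a ^ (N^2 - N))⁻¹ := by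
  set M := 2 * N ^ 2 + 1
  have ha0 : 0 ≤ a := by linarith
  have hratio : 2 * a ≤ M + 1 := by
    have : (N : ℝ) ≤ N ^ 2 := by exact_mod_cast le_self_pow two_ne_zero N
    push_cast [M]
    linarith
  have hfactorial : 2 * a ^ M * a ^ (N ^ 2 - N) ≤ M ! :=
    calc 2 * a ^ M * a ^ (N ^ 2 - N)
        = 2 * a ^ (M + (N ^ 2 - N)) := by ring
      _ ≤ 2 * (N : ℝ) ^ (M + (N ^ 2 - N)) := by gcongr
      _ ≤ M ! := by exact_mod_cast Nat.two_mul_pow_le_factorial_two_mul_sq_add_one hN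
  refine (tsum_pow_add_div_factorial_add_le ha0 hratio).trans ?_
  rw [div_le_iff₀ (by positivity), inv_mul_eq_div, le_div_iff₀ (by positivity)]
  exact hfactorial
end
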